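/- Suppose v = 1/t for some integer t ≥ 2 (so 1/v is an integer). Then b*_i ≤ b_i for every agent i ∈ N: in the sum-closest Nash-optimal allocation O*, no agent receives more big goods than in the optimal dichotomous allocation O. -/

import Mathlib

/-!
Suppose `b*_i > b_i`, and view every good `g` that is big for its owner `σ g` in `O*` as an edge
from `σ g` to its owner `τ g` in `O`. Then `i` has more outgoing than incoming edges, so a greedy
walk from `i` along unused edges stops at an agent `j ≠ i` with `b*_j < b_j`; its edges `T` form a
unit flow from `i` to `j`.

Moving the goods of `T` back to `σ` in `O` keeps `O` non-wasteful and shifts one good from `j` to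
`i`, so the optimality of `O` forces `b_j ≤ b_i + 1`. Moving them forward to `τ` in `O*` brings
`O*` strictly closer to `O` and shifts one big good from `i` to `j`. If `b*_j < b*_i`, then, since
all values are multiples of `v = 1/t`, handing a suitable number of `j`'s small goods to `i` gives
a Nash product at least that of `O*`, contradicting the choice of `O*`. Hence
`b*_i ≤ b*_j < b_j ≤ b_i + 1`.
-/

open Finset

variable {N G : Type*}

def twoVal [DecidableEq G] (Bset : N → Finset G) (v : ℚ) (i : N) (A : Finset G) : ℚ :=
  ((A ∩ Bset i).card : ℚ) + v * ((A \ Bset i).card : ℚ)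

def nashProd [Fintype N] [DecidableEq G] (Bset : N → Finset G) (v : ℚ)
    (A : N → Finset G) : ℚ :=
  ∏ i, twoVal Bset v i (A i)

def IsAllocation [Fintype N] [Fintype G] [DecidableEq G] (A : N → Finset G) : Prop :=
  (Set.univ : Set N).PairwiseDisjoint A ∧ Finset.univ.biUnion A = (Finset.univ : Finset G)

def IsNonWasteful [Fintype N] [DecidableEq G] (Bset A : N → Finset G) : Prop :=
  (Set.univ : Set N).PairwiseDisjoint A ∧ (∀ i, A i ⊆ Bset i) ∧
    Finset.univ.biUnion A = Finset.univ.biUnion Bset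

def DichOptimal [Fintype N] [DecidableEq G] (Bset O : N → Finset G) : Prop :=
  IsNonWasteful Bset O ∧
    ∀ O' : N → Finset G, IsNonWasteful Bset O' →
      ((Finset.univ.filter fun i => O' i ≠ ∅).card ≤
        (Finset.univ.filter fun i => O i ≠ ∅).card) ∧
      ((Finset.univ.filter fun i => O' i ≠ ∅).card =
          (Finset.univ.filter fun i => O i ≠ ∅).card →
        ∏ i ∈ Finset.univ.filter fun i => O' i ≠ ∅, (O' i).card ≤
          ∏ i ∈ Finset.univ.filter fun i => O i ≠ ∅, (O i).card)

def NashOptimalClosest [Fintype N] [Fintype G] [DecidableEq G]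
    (Bset : N → Finset G) (v : ℚ) (O Ostar : N → Finset G) : Prop :=
  IsAllocation Ostar ∧
    (∀ A : N → Finset G, IsAllocation A → nashProd Bset v A ≤ nashProd Bset v Ostar) ∧
    (∀ A : N → Finset G, IsAllocation A → nashProd Bset v A = nashProd Bset v Ostar →
      ∑ i, (O i ∩ A i).card ≤ ∑ i, (O i ∩ Ostar i).card)

def ExistsBBPath [DecidableEq G] (Aa Ab Bset : N → Finset G) (i j : N) : Prop :=
  ∃ (k : ℕ) (hk : 1 ≤ k) (ag : Fin (k + 1) → N) (gd : Fin k → G),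
    Function.Injective gd ∧ ag 0 = i ∧ ag (Fin.last k) = j ∧
    (∀ t : Fin k, gd t ∈ Aa (ag t.castSucc) ∧ gd t ∈ Ab (ag t.succ)) ∧
    (∀ t : Fin k, 1 ≤ t.val →
      (gd t ∈ Bset (ag t.castSucc) ↔
        gd ⟨t.val - 1, by have := t.isLt; omega⟩ ∈ Bset (ag t.castSucc))) ∧
    gd ⟨0, by omega⟩ ∈ Bset i ∧ gd ⟨k - 1, by omega⟩ ∈ Bset j

section Assign

variable {α β : Type*} [DecidableEq β]

def assign (D : Finset α) (σ : α → β) (x : β) : Finset α :=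
  D.filter (σ · = x)

@[simp]
lemma mem_assign {D : Finset α} {σ : α → β} {x : β} {g : α} :
    g ∈ assign D σ x ↔ g ∈ D ∧ σ g = x :=
  mem_filter

lemma pairwiseDisjoint_assign (D : Finset α) (σ : α → β) :
    (Set.univ : Set β).PairwiseDisjoint (assign D σ) := fun _ _ _ _ hxy =>
  disjoint_left.2 fun _ hx hy => hxy ((mem_assign.1 hx).2.symm.trans (mem_assign.1 hy).2)

variable [DecidableEq α]

lemma biUnion_assign [Fintype β] (D : Finset α) (σ : α → β) :
    univ.biUnion (assign D σ) = D := by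
  ext g
  simp

lemma Set.PairwiseDisjoint.exists_eq_assign [Fintype β] [Nonempty β] {A : β → Finset α}
    (hA : (Set.univ : Set β).PairwiseDisjoint A) :
    ∃ σ : α → β, A = assign (Finset.univ.biUnion A) σ := by
  classical
  refine ⟨fun g => if h : ∃ x, g ∈ A x then h.choose else Classical.arbitrary β, ?_⟩
  funext x
  ext g
  simp only [mem_assign, Finset.mem_biUnion, Finset.mem_univ, true_and]
  constructor
  · intro hg
    have h : ∃ y, g ∈ A y := ⟨x, hg⟩
    refine ⟨h, ?_⟩
    rw [dif_pos h]
    by_contra hne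
    exact Finset.disjoint_left.1 (hA (mem_univ _) (mem_univ _) hne) h.choose_spec hg
  · rintro ⟨h, rfl⟩
    rw [dif_pos h]
    exact h.choose_spec

lemma assign_piecewise {D T : Finset α} (hT : T ⊆ D) (f σ : α → β) (x : β) :
    assign D (T.piecewise f σ) x = assign D σ x \ T ∪ T.filter (f · = x) := by
  ext g
  by_cases hg : g ∈ T
  · simp [hg, hT hg]
  · simp [hg]

lemma add_assign_piecewise {M : Type*} [AddCommMonoid M] (φ : Finset α → M)
    (hφ : ∀ S S', Disjoint S S' → φ (S ∪ S') = φ S + φ S') {D T : Finset α} (hT : T ⊆ D)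
    (f σ : α → β) (x : β) :
    φ (assign D (T.piecewise f σ) x) + φ (T.filter (σ · = x)) =
      φ (assign D σ x) + φ (T.filter (f · = x)) := by
  have hσ : assign D σ x = assign D σ x \ T ∪ T.filter (σ · = x) := by
    have h := assign_piecewise hT σ σ x
    rwa [piecewise_same] at h
  have hdisj (f : α → β) : Disjoint (assign D σ x \ T) (T.filter (f · = x)) :=
    sdiff_disjoint.mono_right (filter_subset _ _)
  rw [assign_piecewise hT, hφ _ _ (hdisj f)]
  conv_rhs => rw [hσ, hφ _ _ (hdisj σ)]
  rw [add_right_comm]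

end Assign

section UnitFlow

variable {α β : Type*} [DecidableEq β]

-- Each `g ∈ T` is an edge from `s g` to `h g`; inflow plus `[x = i]` equals outflow plus `[x = j]`.
def IsUnitFlow (T : Finset α) (s h : α → β) (i j : β) : Prop :=
  ∀ x, #(T.filter (h · = x)) + (if x = i then 1 else 0) =
    #(T.filter (s · = x)) + (if x = j then 1 else 0)

variable {E T : Finset α} {s h : α → β} {i j : β}

lemma IsUnitFlow.symm (hf : IsUnitFlow T s h i j) : IsUnitFlow T h s j i :=
  fun x => (hf x).symm

lemma isUnitFlow_empty (s h : α → β) (i : β) : IsUnitFlow ∅ s h i i :=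
  fun _ => rfl

lemma IsUnitFlow.exists_ne (hf : IsUnitFlow T s h i j) (hij : i ≠ j) : ∃ g ∈ T, s g ≠ h g := by
  by_contra! hsh
  have hfilter : T.filter (h · = i) = T.filter (s · = i) :=
    filter_congr fun g hg => by rw [hsh g hg]
  have := hf i
  simp [hfilter, hij] at this

variable [DecidableEq α]

lemma IsUnitFlow.insert_of_notMem (hf : IsUnitFlow T s h i j) {g : α} (hg : g ∉ T) (hgj : s g = j) :
    IsUnitFlow (insert g T) s h i (h g) := by
  have hcard (f : α → β) (x : β) :
      #((insert g T).filter (f · = x)) = #(T.filter (f · = x)) + if x = f g then 1 else 0 := by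
    by_cases hgx : x = f g
    · simp [filter_insert, hgx, card_insert_of_notMem, hg]
    · simp [filter_insert, Ne.symm hgx, hgx]
  intro x
  have hx := hf x
  rw [hcard, hcard]
  subst hgj
  split_ifs at hx ⊢ <;> omega

lemma IsUnitFlow.exists_mem_sdiff (hf : IsUnitFlow T s h i j) (hTE : T ⊆ E)
    (hj : #(E.filter (h · = j)) + (if j = i then 1 else 0) ≤ #(E.filter (s · = j))) :
    ∃ g ∈ E \ T, s g = j := by
  have hin : #(T.filter (h · = j)) ≤ #(E.filter (h · = j)) :=
    card_le_card (filter_subset_filter _ hTE)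
  have hout : #(T.filter (s · = j)) < #(E.filter (s · = j)) := by
    have := hf j
    simp only [if_true] at this
    omega
  obtain ⟨g, hgE, hgT⟩ := exists_mem_notMem_of_card_lt_card hout
  rw [mem_filter] at hgE
  exact ⟨g, mem_sdiff.2 ⟨hgE.1, fun hg => hgT (mem_filter.2 ⟨hg, hgE.2⟩)⟩, hgE.2⟩

-- Extend the flow greedily along unused edges; it can only get stuck at a sink `j ≠ i`.
lemma IsUnitFlow.exists_isUnitFlow_to_sink (hf : IsUnitFlow T s h i j) (hTE : T ⊆ E)
    (hi : #(E.filter (h · = i)) < #(E.filter (s · = i))) :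
    ∃ T' ⊆ E, ∃ j', j' ≠ i ∧ #(E.filter (s · = j')) < #(E.filter (h · = j')) ∧
      IsUnitFlow T' s h i j' := by
  induction hn : #(E \ T) using Nat.strong_induction_on generalizing T j with
  | _ n ih =>
    by_cases hj : j ≠ i ∧ #(E.filter (s · = j)) < #(E.filter (h · = j))
    · exact ⟨T, hTE, j, hj.1, hj.2, hf⟩
    simp only [not_and, not_lt] at hj
    obtain ⟨g, hg, rfl⟩ := hf.exists_mem_sdiff hTE (by
      split_ifs with hji
      · subst hji
        omega
      · simpa using hj hji)
    have hlt : #(E \ insert g T) < n := by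
      rw [← hn, sdiff_insert]
      exact card_erase_lt_of_mem hg
    rw [mem_sdiff] at hg
    exact ih _ hlt (hf.insert_of_notMem hg.2 rfl) (insert_subset hg.1 hTE) rfl

lemma IsUnitFlow.card_assign_piecewise {D : Finset α} (hf : IsUnitFlow T s h i j) (hT : T ⊆ D)
    (x : β) :
    #(assign D (T.piecewise h s) x) + (if x = i then 1 else 0) =
      #(assign D s x) + (if x = j then 1 else 0) := by
  have := add_assign_piecewise card (fun _ _ => card_union_of_disjoint) hT h s x
  have := hf x
  omega

end UnitFlow

section Products

variable {ι R : Type*} [DecidableEq ι] {s : Finset ι} {f g : ι → R} {i j : ι}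

lemma prod_eq_mul_mul_prod_erase_erase [CommMonoid R] (hi : i ∈ s) (hj : j ∈ s) (hij : i ≠ j)
    (f : ι → R) : ∏ x ∈ s, f x = f i * f j * ∏ x ∈ (s.erase i).erase j, f x := by
  rw [← mul_prod_erase s f hi, ← mul_prod_erase (s.erase i) f (mem_erase.2 ⟨hij.symm, hj⟩),
    mul_assoc]

lemma prod_erase_erase_congr [CommMonoid R] (heq : ∀ x ∈ s, x ≠ i → x ≠ j → f x = g x) :
    ∏ x ∈ (s.erase i).erase j, f x = ∏ x ∈ (s.erase i).erase j, g x :=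
  prod_congr rfl fun x hx => by
    obtain ⟨hxj, hx⟩ := mem_erase.1 hx
    obtain ⟨hxi, hx⟩ := mem_erase.1 hx
    exact heq x hx hxi hxj

variable [CommSemiring R] [PartialOrder R]

lemma prod_le_prod_of_mul_le_mul [IsOrderedRing R] (hi : i ∈ s) (hj : j ∈ s) (hij : i ≠ j)
    (heq : ∀ x ∈ s, x ≠ i → x ≠ j → f x = g x) (h : f i * f j ≤ g i * g j)
    (hf : ∀ x ∈ s, 0 ≤ f x) : ∏ x ∈ s, f x ≤ ∏ x ∈ s, g x := by
  rw [prod_eq_mul_mul_prod_erase_erase hi hj hij, prod_eq_mul_mul_prod_erase_erase hi hj hij,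
    ← prod_erase_erase_congr heq]
  exact mul_le_mul_of_nonneg_right h
    (prod_nonneg fun x hx => hf x (mem_of_mem_erase (mem_of_mem_erase hx)))

lemma prod_lt_prod_of_mul_lt_mul [IsStrictOrderedRing R] (hi : i ∈ s) (hj : j ∈ s) (hij : i ≠ j)
    (heq : ∀ x ∈ s, x ≠ i → x ≠ j → f x = g x) (h : f i * f j < g i * g j)
    (hf : ∀ x ∈ s, 0 < f x) : ∏ x ∈ s, f x < ∏ x ∈ s, g x := by
  rw [prod_eq_mul_mul_prod_erase_erase hi hj hij, prod_eq_mul_mul_prod_erase_erase hi hj hij,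
    ← prod_erase_erase_congr heq]
  exact mul_lt_mul_of_pos_right h
    (prod_pos fun x hx => hf x (mem_of_mem_erase (mem_of_mem_erase hx)))

end Products

-- With `a = p + v q` and `c = b + v s`, take `r = 0` if `c + 1 ≤ a` and `r = t (c + 1 - a)`
-- otherwise: it is a natural number since `t a, t c ∈ ℕ`, and it swaps the two factors.
lemma exists_le_mul_le_mul_sub_add {t : ℕ} (ht : t ≠ 0) {v : ℚ} (hv : v = 1 / t) (p q b s : ℕ)
    (hbp : b + 1 ≤ p) :
    ∃ r ≤ s, (p + v * q) * (b + v * s) ≤ (p + v * q - 1 + v * r) * (b + v * s + 1 - v * r) ∧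
      0 ≤ b + v * s + 1 - v * r := by
  have hv0 : 0 ≤ v := by rw [hv]; positivity
  have hvt : v * t = 1 := by rw [hv]; field_simp
  by_cases hge : b + v * s + 1 ≤ p + v * q
  · refine ⟨0, Nat.zero_le _, ?_, ?_⟩ <;>
      simp only [Nat.cast_zero, mul_zero, add_zero, sub_zero]
    · nlinarith
    · positivity
  · push Not at hge
    have hlt : t * p + q < t + (t * b + s) := by
      have : ((t * p + q : ℕ) : ℚ) < ((t + (t * b + s) : ℕ) : ℚ) := by
        push_cast
        nlinarith
      exact_mod_cast this
    have htb : t * b + t ≤ t * p := by simpa [mul_add] using Nat.mul_le_mul_left t hbp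
    have hvr : v * ((t + (t * b + s) - (t * p + q) : ℕ) : ℚ) = 1 + (b + v * s) - (p + v * q) := by
      rw [Nat.cast_sub hlt.le]
      push_cast
      linear_combination (1 + (b : ℚ) - p) * hvt
    refine ⟨t + (t * b + s) - (t * p + q), by omega, le_of_eq ?_, ?_⟩ <;> rw [hvr]
    · ring
    · ring_nf
      positivity

section TwoVal

variable [DecidableEq G] (Bset : N → Finset G) (v : ℚ)

lemma twoVal_union {S S' : Finset G} (h : Disjoint S S') (x : N) :
    twoVal Bset v x (S ∪ S') = twoVal Bset v x S + twoVal Bset v x S' := by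
  simp only [twoVal, union_inter_distrib_right, union_sdiff_distrib,
    card_union_of_disjoint (h.mono inter_subset_left inter_subset_left),
    card_union_of_disjoint (h.mono sdiff_subset sdiff_subset)]
  push_cast
  ring

@[simp]
lemma twoVal_empty (x : N) : twoVal Bset v x ∅ = 0 := by
  simp [twoVal]

lemma twoVal_eq_card {S : Finset G} {x : N} (h : S ⊆ Bset x) : twoVal Bset v x S = #S := by
  simp [twoVal, inter_eq_left.2 h, sdiff_eq_empty_iff_subset.2 h]

lemma twoVal_eq_mul_card {S : Finset G} {x : N} (h : Disjoint S (Bset x)) :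
    twoVal Bset v x S = v * #S := by
  simp [twoVal, disjoint_iff_inter_eq_empty.1 h, sdiff_eq_self_of_disjoint h]

variable {v}

lemma twoVal_nonneg (hv : 0 ≤ v) (x : N) (S : Finset G) : 0 ≤ twoVal Bset v x S := by
  unfold twoVal
  positivity

lemma mul_card_le_twoVal (hv : v ≤ 1) (x : N) (S : Finset G) :
    v * #S ≤ twoVal Bset v x S := by
  have h := card_inter_add_card_sdiff S (Bset x)
  unfold twoVal
  rw [← h]
  push_cast
  nlinarith [(#(S ∩ Bset x)).cast_nonneg (α := ℚ)]

end TwoVal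

section TwoValTransfer

variable [DecidableEq G] [DecidableEq N] (Bset : N → Finset G) (v : ℚ) {D T : Finset G}
  {s h : G → N} {i j : N}

lemma IsUnitFlow.twoVal_assign_piecewise (hf : IsUnitFlow T s h i j) (hT : T ⊆ D)
    (hB : ∀ g ∈ T, g ∈ Bset (s g) ∧ g ∈ Bset (h g)) (x : N) :
    twoVal Bset v x (assign D (T.piecewise h s) x) + (if x = i then 1 else 0) =
      twoVal Bset v x (assign D s x) + (if x = j then 1 else 0) := by
  have hbig (f : G → N) (hf : ∀ g ∈ T, g ∈ Bset (f g)) :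
      twoVal Bset v x (T.filter (f · = x)) = #(T.filter (f · = x)) :=
    twoVal_eq_card Bset v fun g hg => by
      obtain ⟨hgT, rfl⟩ := mem_filter.1 hg
      exact hf g hgT
  have h1 := add_assign_piecewise (twoVal Bset v x) (fun _ _ hS => twoVal_union Bset v hS x)
    hT h s x
  rw [hbig s fun g hg => (hB g hg).1, hbig h fun g hg => (hB g hg).2] at h1
  have h2 : ((#(T.filter (h · = x)) + (if x = i then 1 else 0) : ℕ) : ℚ) =
      ((#(T.filter (s · = x)) + (if x = j then 1 else 0) : ℕ) : ℚ) := congrArg _ (hf x)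
  push_cast at h2
  linarith

lemma twoVal_assign_piecewise_const {S : Finset G} {σ : G → N}
    (hSD : S ⊆ D) (hS : ∀ g ∈ S, σ g = j) (x : N) :
    twoVal Bset v x (assign D (S.piecewise (fun _ => i) σ) x) +
        (if x = j then twoVal Bset v x S else 0) =
      twoVal Bset v x (assign D σ x) + (if x = i then twoVal Bset v x S else 0) := by
  have h := add_assign_piecewise (twoVal Bset v x) (fun _ _ hS => twoVal_union Bset v hS x)
    hSD (fun _ => i) σ x
  have hfilter : S.filter (σ · = x) = S.filter (fun _ => j = x) :=
    filter_congr fun g hg => by rw [hS g hg]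
  rw [hfilter, filter_const, filter_const] at h
  simpa only [@eq_comm _ j x, @eq_comm _ i x, apply_ite (twoVal Bset v x), twoVal_empty] using h

end TwoValTransfer

section Allocations

variable [Fintype N] [Fintype G] [DecidableEq G]

lemma NashOptimalClosest.nashProd_lt_of_lt {Bset O Ostar : N → Finset G} {v : ℚ}
    (hOstar : NashOptimalClosest Bset v O Ostar) {A : N → Finset G} (hA : IsAllocation A)
    (hlt : ∑ x, #(O x ∩ Ostar x) < ∑ x, #(O x ∩ A x)) :
    nashProd Bset v A < nashProd Bset v Ostar :=
  (hOstar.2.1 A hA).lt_of_ne fun heq => (hOstar.2.2 A hA heq).not_gt hlt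

variable [DecidableEq N]

lemma isAllocation_assign (σ : G → N) : IsAllocation (assign univ σ) :=
  ⟨pairwiseDisjoint_assign univ σ, biUnion_assign univ σ⟩

lemma IsAllocation.exists_eq_assign [Nonempty N] {A : N → Finset G} (hA : IsAllocation A) :
    ∃ σ : G → N, A = assign univ σ := by
  simpa only [hA.2] using hA.1.exists_eq_assign

lemma sum_card_inter_assign (O : N → Finset G) (σ : G → N) :
    ∑ x, #(O x ∩ assign univ σ x) = #(univ.filter fun g => g ∈ O (σ g)) := by
  rw [card_eq_sum_card_fiberwise (f := σ) (t := univ) fun _ _ => mem_coe.2 (mem_univ _)]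
  refine sum_congr rfl fun x _ => congrArg card ?_
  ext g
  simp only [mem_inter, mem_assign, mem_filter, mem_univ, true_and]
  constructor <;> rintro ⟨hg, rfl⟩ <;> exact ⟨hg, rfl⟩

lemma sum_card_inter_assign_lt {O : N → Finset G} {σ σ' : G → N}
    (hmono : ∀ g, g ∈ O (σ g) → g ∈ O (σ' g)) {g : G} (hg : g ∉ O (σ g)) (hg' : g ∈ O (σ' g)) :
    ∑ x, #(O x ∩ assign univ σ x) < ∑ x, #(O x ∩ assign univ σ' x) := by
  simp only [sum_card_inter_assign]
  refine card_lt_card ⟨fun g' => by simpa using hmono g', not_subset.2 ⟨g, ?_, ?_⟩⟩ <;>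
    simpa

end Allocations

theorem DichOptimal.card_le_card_add_one [Fintype N] [DecidableEq N] [DecidableEq G]
    {Bset O O' : N → Finset G} {i j : N} (hO : DichOptimal Bset O)
    (hO' : IsNonWasteful Bset O') (hij : i ≠ j)
    (hcard : ∀ x, #(O' x) + (if x = j then 1 else 0) = #(O x) + (if x = i then 1 else 0)) :
    #(O j) ≤ #(O i) + 1 := by
  by_contra! hji
  obtain ⟨hnum, hprod⟩ := hO.2 O' hO'
  have hci := hcard i
  have hcj := hcard j
  simp only [if_neg hij, if_neg hij.symm, if_true, add_zero] at hci hcj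
  have hx (x : N) (hxi : x ≠ i) (hxj : x ≠ j) : #(O' x) = #(O x) := by
    simpa [hxi, hxj] using hcard x
  have hne (A : Finset G) : A ≠ ∅ ↔ 0 < #A := by rw [card_pos, nonempty_iff_ne_empty]
  have hF : insert i (univ.filter fun x => O x ≠ ∅) = univ.filter fun x => O' x ≠ ∅ := by
    ext x
    simp only [mem_insert, mem_filter, mem_univ, true_and, hne]
    by_cases hxi : x = i
    · simp only [hxi, true_or, true_iff]
      omega
    by_cases hxj : x = j
    · simp only [hxj, hij.symm, false_or]
      omega
    · simp [hxi, hx x hxi hxj]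
  by_cases hOi : O i = ∅
  · rw [← hF, card_insert_of_notMem (by simp [hOi])] at hnum
    exact Nat.not_succ_le_self _ hnum
  · rw [← hF, insert_eq_of_mem (by simp [hOi])] at hprod
    refine (hprod rfl).not_gt (prod_lt_prod_of_mul_lt_mul (by simp [hOi]) ?_ hij
      (fun x _ hxi hxj => (hx x hxi hxj).symm) ?_ fun x hx => ?_)
    · simp only [mem_filter, mem_univ, true_and, hne]
      omega
    · rw [← hcj] at hji ⊢
      rw [hci]
      nlinarith
    · simpa [hne] using hx

lemma isNonWasteful_assign [Fintype N] [DecidableEq N] [DecidableEq G] {Bset : N → Finset G}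
    {τ : G → N} (h : ∀ g ∈ univ.biUnion Bset, g ∈ Bset (τ g)) :
    IsNonWasteful Bset (assign (univ.biUnion Bset) τ) :=
  ⟨pairwiseDisjoint_assign _ τ, fun _ g hg => by
    obtain ⟨hgD, rfl⟩ := mem_assign.1 hg
    exact h g hgD, biUnion_assign _ τ⟩

theorem DichOptimal.card_le_card_add_one_of_isUnitFlow [Fintype N] [DecidableEq N]
    [DecidableEq G] {Bset O : N → Finset G} {σ τ : G → N} {T : Finset G} {i j : N}
    (hO : DichOptimal Bset O) (hτ : O = assign (univ.biUnion Bset) τ)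
    (hTB : ∀ g ∈ T, g ∈ Bset (σ g) ∧ g ∈ O (τ g)) (hT : IsUnitFlow T σ τ i j) (hij : i ≠ j) :
    #(O j) ≤ #(O i) + 1 := by
  subst hτ
  have hTD : T ⊆ univ.biUnion Bset := fun g hg => (mem_assign.1 (hTB g hg).2).1
  refine hO.card_le_card_add_one (isNonWasteful_assign fun g hg => ?_) hij
    (hT.symm.card_assign_piecewise hTD)
  by_cases hgT : g ∈ T
  · rw [piecewise_eq_of_mem _ _ _ hgT]
    exact (hTB g hgT).1
  · rw [piecewise_eq_of_notMem _ _ _ hgT]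
    exact hO.1.2.1 _ (mem_assign.2 ⟨hg, rfl⟩)

section Transfer

variable [Fintype N] [DecidableEq N] [Fintype G] [DecidableEq G] {Bset O : N → Finset G}
  {v : ℚ} {σ τ : G → N} {T S : Finset G} {i j : N}

theorem nashProd_assign_le_nashProd_transfer (hv0 : 0 ≤ v) (hv1 : v ≤ 1)
    (hTB : ∀ g ∈ T, g ∈ Bset (σ g) ∧ g ∈ Bset (τ g)) (hT : IsUnitFlow T σ τ i j) (hij : i ≠ j)
    (hS : ∀ g ∈ S, σ g = j ∧ g ∉ Bset j)
    (h : twoVal Bset v i (assign univ σ i) * twoVal Bset v j (assign univ σ j) ≤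
      (twoVal Bset v i (assign univ σ i) - 1 + v * #S) *
        (twoVal Bset v j (assign univ σ j) + 1 - v * #S))
    (hnn : 0 ≤ twoVal Bset v j (assign univ σ j) + 1 - v * #S) :
    nashProd Bset v (assign univ σ) ≤
      nashProd Bset v (assign univ (S.piecewise (fun _ => i) (T.piecewise τ σ))) := by
  have hu₁ := hT.twoVal_assign_piecewise Bset v (subset_univ T) hTB
  have hu₂ := twoVal_assign_piecewise_const Bset v (i := i) (σ := T.piecewise τ σ)
    (subset_univ S) fun g hg => by
      have hgT : g ∉ T := fun hgT => (hS g hg).2 ((hS g hg).1 ▸ (hTB g hgT).1)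
      rw [piecewise_eq_of_notMem _ _ _ hgT, (hS g hg).1]
  refine prod_le_prod_of_mul_le_mul (mem_univ i) (mem_univ j) hij (fun x _ hxi hxj => ?_) ?_
    fun x _ => twoVal_nonneg Bset hv0 x _
  · have h1 := hu₁ x
    have h2 := hu₂ x
    simp only [if_neg hxi, if_neg hxj, add_zero] at h1 h2
    linarith
  · have h1i := hu₁ i
    have h1j := hu₁ j
    have h2i := hu₂ i
    have h2j := hu₂ j
    simp only [if_neg hij, if_neg hij.symm, if_true, add_zero] at h1i h1j h2i h2j
    have hSi : v * #S ≤ twoVal Bset v i S := mul_card_le_twoVal Bset hv1 i S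
    have hSj : twoVal Bset v j S = v * #S :=
      twoVal_eq_mul_card Bset v (disjoint_left.2 fun g hg => (hS g hg).2)
    exact h.trans (mul_le_mul (by linarith) (by linarith) hnn (twoVal_nonneg Bset hv0 _ _))

theorem sum_card_inter_assign_lt_transfer (hO : IsNonWasteful Bset O)
    (hTB : ∀ g ∈ T, g ∈ Bset (σ g) ∧ g ∈ O (τ g)) (hT : IsUnitFlow T σ τ i j) (hij : i ≠ j)
    (hS : ∀ g ∈ S, σ g = j ∧ g ∉ Bset j) :
    ∑ x, #(O x ∩ assign univ σ x) <
      ∑ x, #(O x ∩ assign univ (S.piecewise (fun _ => i) (T.piecewise τ σ)) x) := by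
  have hST (g : G) (hgS : g ∈ S) (hgT : g ∈ T) : False :=
    (hS g hgS).2 ((hS g hgS).1 ▸ (hTB g hgT).1)
  have hT' (g : G) (hgT : g ∈ T) : S.piecewise (fun _ => i) (T.piecewise τ σ) g = τ g := by
    rw [piecewise_eq_of_notMem _ _ _ fun hgS => hST g hgS hgT, piecewise_eq_of_mem _ _ _ hgT]
  obtain ⟨g, hgT, hg⟩ := hT.exists_ne hij
  refine sum_card_inter_assign_lt (fun g' hg' => ?_) (g := g) (fun hgO => hg ?_) ?_
  · by_cases hgS : g' ∈ S
    · exact absurd (hO.2.1 _ hg') ((hS g' hgS).1 ▸ (hS g' hgS).2)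
    by_cases hgT' : g' ∈ T
    · rw [hT' g' hgT']
      exact (hTB g' hgT').2
    · rwa [piecewise_eq_of_notMem _ _ _ hgS, piecewise_eq_of_notMem _ _ _ hgT']
  · by_contra hne
    exact disjoint_left.1 (hO.1 (Set.mem_univ _) (Set.mem_univ _) hne) hgO (hTB g hgT).2
  · rw [hT' g hgT]
    exact (hTB g hgT).2

end Transfer

theorem NashOptimalClosest.card_inter_le_of_isUnitFlow [Fintype N] [DecidableEq N] [Fintype G]
    [DecidableEq G] {Bset O : N → Finset G} {v : ℚ} {t : ℕ} {σ τ : G → N} {T : Finset G}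
    {i j : N} (hOstar : NashOptimalClosest Bset v O (assign univ σ)) (hO : IsNonWasteful Bset O)
    (ht : t ≠ 0) (hv : v = 1 / t) (hTB : ∀ g ∈ T, g ∈ Bset (σ g) ∧ g ∈ O (τ g))
    (hT : IsUnitFlow T σ τ i j) (hij : i ≠ j) :
    #(assign univ σ i ∩ Bset i) ≤ #(assign univ σ j ∩ Bset j) := by
  by_contra! hlt
  have hv0 : 0 ≤ v := by rw [hv]; positivity
  have hv1 : v ≤ 1 := by
    rw [hv]
    exact div_le_one_of_le₀ (by exact_mod_cast Nat.one_le_iff_ne_zero.2 ht) (Nat.cast_nonneg _)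
  obtain ⟨r, hr, hprod, hnn⟩ := exists_le_mul_le_mul_sub_add ht hv _ #(assign univ σ i \ Bset i) _
    #(assign univ σ j \ Bset j) hlt
  obtain ⟨S, hS, rfl⟩ := exists_subset_card_eq hr
  have hSj (g : G) (hg : g ∈ S) : σ g = j ∧ g ∉ Bset j := by
    obtain ⟨hgσ, hgB⟩ := mem_sdiff.1 (hS hg)
    exact ⟨(mem_assign.1 hgσ).2, hgB⟩
  have hTB' (g : G) (hg : g ∈ T) : g ∈ Bset (σ g) ∧ g ∈ Bset (τ g) :=
    ⟨(hTB g hg).1, hO.2.1 _ (hTB g hg).2⟩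
  exact (hOstar.nashProd_lt_of_lt (isAllocation_assign _)
    (sum_card_inter_assign_lt_transfer hO hTB hT hij hSj)).not_ge
    (nashProd_assign_le_nashProd_transfer hv0 hv1 hTB' hT hij hSj hprod hnn)

theorem exists_isUnitFlow_of_card_lt [Fintype N] [DecidableEq N] [Fintype G] [DecidableEq G]
    {Bset O : N → Finset G} {σ τ : G → N} {i : N} (hτ : O = assign (univ.biUnion Bset) τ)
    (hi : #(O i) < #(assign univ σ i ∩ Bset i)) :
    ∃ (T : Finset G) (j : N), j ≠ i ∧ #(assign univ σ j ∩ Bset j) < #(O j) ∧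
      (∀ g ∈ T, g ∈ Bset (σ g) ∧ g ∈ O (τ g)) ∧ IsUnitFlow T σ τ i j := by
  have hτO (g : G) (hg : g ∈ Bset (σ g)) : g ∈ O (τ g) := by
    rw [hτ, mem_assign, mem_biUnion]
    exact ⟨⟨σ g, mem_univ _, hg⟩, rfl⟩
  set E := univ.filter fun g => g ∈ Bset (σ g)
  have hEσ (x : N) : E.filter (σ · = x) = assign univ σ x ∩ Bset x := by
    ext g
    simp only [E, mem_filter, mem_univ, true_and, mem_inter, mem_assign]
    constructor
    · rintro ⟨hg, rfl⟩
      exact ⟨rfl, hg⟩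
    · rintro ⟨rfl, hg⟩
      exact ⟨hg, rfl⟩
  have hEτ (x : N) : #(E.filter (τ · = x)) ≤ #(O x) := card_le_card fun g hg => by
    obtain ⟨hgE, rfl⟩ := mem_filter.1 hg
    exact hτO g (mem_filter.1 hgE).2
  obtain ⟨T, hTE, j, hji, hj, hT⟩ := (isUnitFlow_empty σ τ i).exists_isUnitFlow_to_sink
    (empty_subset E) (by rw [hEσ]; exact (hEτ i).trans_lt hi)
  refine ⟨T, j, hji, by rw [← hEσ]; exact hj.trans_le (hEτ j), fun g hg => ?_, hT⟩
  have hgB := (mem_filter.1 (hTE hg)).2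
  exact ⟨hgB, hτO g hgB⟩

theorem stmt6_general [Fintype N] [Fintype G] [DecidableEq G]
    (Bset : N → Finset G) (v : ℚ)
    (t : ℕ) (ht : 2 ≤ t) (hv : v = 1 / (t : ℚ))
    (O Ostar : N → Finset G)
    (hO : DichOptimal Bset O) (hOstar : NashOptimalClosest Bset v O Ostar) :
    ∀ i : N, (Ostar i ∩ Bset i).card ≤ (O i ∩ Bset i).card := by
  classical
  intro i
  have : Nonempty N := ⟨i⟩
  obtain ⟨σ, rfl⟩ := hOstar.1.exists_eq_assign
  obtain ⟨τ, hτ⟩ := hO.1.1.exists_eq_assign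
  rw [hO.1.2.2] at hτ
  rw [inter_eq_left.2 (hO.1.2.1 i)]
  by_contra! hi
  obtain ⟨T, j, hji, hj, hTB, hT⟩ := exists_isUnitFlow_of_card_lt hτ hi
  have h₁ := hOstar.card_inter_le_of_isUnitFlow hO.1 (by omega) hv hTB hT hji.symm
  have h₂ := hO.card_le_card_add_one_of_isUnitFlow hτ hTB hT hji.symm
  omega

/-- When `v = 1/t` for an integer `t ≥ 2`, no agent receives more big goods in the
sum-closest Nash-optimal allocation `O*` than in the optimal dichotomous allocation `O`. -/
theorem stmt6 [Fintype N] [DecidableEq N] [Fintype G] [DecidableEq G]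
    (Bset : N → Finset G) (v : ℚ) (hv0 : 0 < v) (hv1 : v < 1)
    (t : ℕ) (ht : 2 ≤ t) (hv : v = 1 / (t : ℚ))
    (O Ostar : N → Finset G)
    (hO : DichOptimal Bset O) (hOstar : NashOptimalClosest Bset v O Ostar) :
    ∀ i : N, (Ostar i ∩ Bset i).card ≤ (O i ∩ Bset i).card :=
  stmt6_general Bset v t ht hv O Ostar hO hOstar
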